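/- Let A be a maximal monotone operator on H and H_A its Fitzpatrick function. If (x*, x) is a subgradient of H_A at a point (u, u*) (i.e. H_A(u,u*) + ⟨x*, z − u⟩ + ⟨x, z* − u*⟩ ≤ H_A(z, z*) for all (z, z*)), then ⟨u − x, u* − x*⟩ ≤ ⟨z − x, z* − x*⟩ for every (z, z*) ∈ A. -/

import Mathlib

/-!
At a point of `A` the Fitzpatrick function equals the duality pairing, and maximality forces
`⟨u, u*⟩ ≤ H_A(u, u*)` everywhere. Evaluating the subgradient inequality at `(z, z*) ∈ A` therefore
gives `⟨u, u*⟩ + ⟨x*, z - u⟩ + ⟨x, z* - u*⟩ ≤ ⟨z, z*⟩`, which rearranges to the claim.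
-/

section Fitzpatrick

variable {H : Type*} [NormedAddCommGroup H] [InnerProductSpace ℝ H]

/-- The Fitzpatrick function `H_A`, with values in `EReal` so that it is defined for every `A`. -/
noncomputable def fitzpatrick (A : Set (H × H)) (x xs : H) : EReal :=
  ⨆ p ∈ A, ((inner ℝ p.1 xs + inner ℝ x p.2 - inner ℝ p.1 p.2 : ℝ) : EReal)

theorem fitzpatrick_term_eq (x xs y ys : H) :
    (inner ℝ y xs + inner ℝ x ys - inner ℝ y ys : ℝ)
      = inner ℝ x xs - inner ℝ (x - y) (xs - ys) := by
  simp only [inner_sub_left, inner_sub_right]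
  ring

theorem le_fitzpatrick_of_mem {A : Set (H × H)} {p : H × H} (hp : p ∈ A) (x xs : H) :
    ((inner ℝ p.1 xs + inner ℝ x p.2 - inner ℝ p.1 p.2 : ℝ) : EReal) ≤ fitzpatrick A x xs :=
  le_iSup₂ (f := fun p (_ : p ∈ A) =>
    ((inner ℝ p.1 xs + inner ℝ x p.2 - inner ℝ p.1 p.2 : ℝ) : EReal)) p hp

theorem inner_le_fitzpatrick_of_mem {A : Set (H × H)} {z zs : H} (hz : (z, zs) ∈ A) :
    ((inner ℝ z zs : ℝ) : EReal) ≤ fitzpatrick A z zs := by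
  simpa [fitzpatrick_term_eq] using le_fitzpatrick_of_mem hz z zs

theorem fitzpatrick_le_inner {A : Set (H × H)} {z zs : H}
    (hmono : ∀ p ∈ A, (0 : ℝ) ≤ inner ℝ (z - p.1) (zs - p.2)) :
    fitzpatrick A z zs ≤ ((inner ℝ z zs : ℝ) : EReal) :=
  iSup₂_le fun p hp => EReal.coe_le_coe_iff.mpr <| by
    rw [fitzpatrick_term_eq]
    linarith [hmono p hp]

/-- If `(u, u*)` lay strictly above `H_A`, it would be monotonically related to all of `A`,
hence in `A` by maximality, where `H_A` equals the pairing. -/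
theorem inner_le_fitzpatrick {A : Set (H × H)}
    (hmax : ∀ x xs : H, (∀ u ∈ A, (0 : ℝ) ≤ inner ℝ (x - u.1) (xs - u.2)) → (x, xs) ∈ A)
    (u us : H) :
    ((inner ℝ u us : ℝ) : EReal) ≤ fitzpatrick A u us := by
  by_contra! hlt
  have hmem : (u, us) ∈ A := hmax u us fun p hp => by
    have hterm := EReal.coe_lt_coe_iff.mp ((le_fitzpatrick_of_mem hp u us).trans_lt hlt)
    rw [fitzpatrick_term_eq] at hterm
    linarith
  exact hlt.not_ge (inner_le_fitzpatrick_of_mem hmem)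

end Fitzpatrick

theorem subgradient_fitzpatrick_inner_le_general
    {H : Type*} [NormedAddCommGroup H] [InnerProductSpace ℝ H]
    (A : Set (H × H))
    (hmono : ∀ p ∈ A, ∀ q ∈ A, (0 : ℝ) ≤ inner ℝ (p.1 - q.1) (p.2 - q.2))
    (hmax : ∀ x xs : H, (∀ u ∈ A, (0 : ℝ) ≤ inner ℝ (x - u.1) (xs - u.2)) → (x, xs) ∈ A)
    (u us x xs : H)
    (hsub : ∀ z zs : H,
      (⨆ p ∈ A, (((inner ℝ p.1 us + inner ℝ u p.2 - inner ℝ p.1 p.2 : ℝ)) : EReal))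
          + (((inner ℝ xs (z - u) + inner ℝ x (zs - us) : ℝ)) : EReal)
        ≤ ⨆ p ∈ A, (((inner ℝ p.1 zs + inner ℝ z p.2 - inner ℝ p.1 p.2 : ℝ)) : EReal)) :
    ∀ z ∈ A, (inner ℝ (u - x) (us - xs) : ℝ) ≤ inner ℝ (z.1 - x) (z.2 - xs) := by
  rintro ⟨z, zs⟩ hz
  have hpair : inner ℝ u us + (inner ℝ xs (z - u) + inner ℝ x (zs - us)) ≤ (inner ℝ z zs : ℝ) :=
    EReal.coe_le_coe_iff.mp <| calc
      ((inner ℝ u us + (inner ℝ xs (z - u) + inner ℝ x (zs - us)) : ℝ) : EReal)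
          ≤ fitzpatrick A u us + ((inner ℝ xs (z - u) + inner ℝ x (zs - us) : ℝ) : EReal) := by
            rw [EReal.coe_add]
            exact add_le_add_left (inner_le_fitzpatrick hmax u us) _
      _ ≤ fitzpatrick A z zs := hsub z zs
      _ ≤ ((inner ℝ z zs : ℝ) : EReal) := fitzpatrick_le_inner (hmono _ hz)
  simp only [inner_sub_left, inner_sub_right, real_inner_comm xs] at hpair ⊢
  linarith

/-- If `(x*, x)` is a subgradient of the Fitzpatrick function of a maximal monotone
set `A` at `(u, u*)`, then `⟨u - x, u* - x*⟩ ≤ ⟨z - x, z* - x*⟩` for all `(z, z*) ∈ A`. -/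
theorem subgradient_fitzpatrick_inner_le
    {H : Type*} [NormedAddCommGroup H] [InnerProductSpace ℝ H]
    (A : Set (H × H))
    (hmono : ∀ p ∈ A, ∀ q ∈ A, (0 : ℝ) ≤ inner ℝ (p.1 - q.1) (p.2 - q.2))
    (hmax : ∀ x xs : H, (∀ u ∈ A, (0 : ℝ) ≤ inner ℝ (x - u.1) (xs - u.2)) → (x, xs) ∈ A)
    (u us x xs : H)
    (hfin : ∃ c : ℝ, (⨆ p ∈ A, (((inner ℝ p.1 us + inner ℝ u p.2 - inner ℝ p.1 p.2 : ℝ)) : EReal))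
      = (c : EReal))
    (hsub : ∀ z zs : H,
      (⨆ p ∈ A, (((inner ℝ p.1 us + inner ℝ u p.2 - inner ℝ p.1 p.2 : ℝ)) : EReal))
          + (((inner ℝ xs (z - u) + inner ℝ x (zs - us) : ℝ)) : EReal)
        ≤ ⨆ p ∈ A, (((inner ℝ p.1 zs + inner ℝ z p.2 - inner ℝ p.1 p.2 : ℝ)) : EReal)) :
    ∀ z ∈ A, (inner ℝ (u - x) (us - xs) : ℝ) ≤ inner ℝ (z.1 - x) (z.2 - xs) :=
  subgradient_fitzpatrick_inner_le_general A hmono hmax u us x xs hsub
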